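/- Let G be a finite simple graph with minimum degree at least 1. Then R(G) ≤ |G|/2, where R(G) = ∑_{uv ∈ E(G)} (d(u)·d(v))^{-1/2} is the Randić index and |G| is the number of vertices. -/

import Mathlib

/-!
By AM–GM each edge term `(d u * d v)^(-1/2)` is at most `(1/d u + 1/d v)/2`. Summed over the
edges, every vertex `v` collects `d v` copies of `1/(2 d v)`, i.e. at most `1/2`.
-/

open Finset

namespace Real

theorem mul_rpow_neg_half_le {a b : ℝ} (ha : 0 ≤ a) (hb : 0 ≤ b) :
    (a * b) ^ (-(1 / 2) : ℝ) ≤ a⁻¹ / 2 + b⁻¹ / 2 := by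
  have amgm := geom_mean_le_arith_mean2_weighted (w₁ := 1 / 2) (w₂ := 1 / 2) (by norm_num)
    (by norm_num) (inv_nonneg.2 ha) (inv_nonneg.2 hb) (by norm_num)
  rw [rpow_neg (mul_nonneg ha hb), ← inv_rpow (mul_nonneg ha hb), mul_inv,
    mul_rpow (inv_nonneg.2 ha) (inv_nonneg.2 hb)]
  linarith

end Real

namespace SimpleGraph

variable {V M : Type*} [Fintype V] (G : SimpleGraph V) [DecidableRel G.Adj] [AddCommMonoid M]

theorem sum_darts_fst (g : V → M) : ∑ d : G.Dart, g d.fst = ∑ v, G.degree v • g v := by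
  classical
  rw [← sum_fiberwise_of_maps_to (g := fun d : G.Dart => d.fst) (t := univ) fun _ _ => mem_univ _]
  refine sum_congr rfl fun v _ => ?_
  rw [sum_congr rfl fun d hd => by rw [(mem_filter.1 hd).2], sum_const]
  congr 1
  convert G.dart_fst_fiber_card_eq_degree v

theorem sum_edgeFinset_lift_add [DecidableEq V] (g : V → M) :
    ∑ e ∈ G.edgeFinset, Sym2.lift ⟨fun u v => g u + g v, fun _ _ => add_comm _ _⟩ e =
      ∑ v, G.degree v • g v := by
  rw [← sum_darts_fst, ← sum_fiberwise_of_maps_to (g := Dart.edge) (t := G.edgeFinset)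
    fun d _ => mem_edgeFinset.2 d.edge_mem]
  refine sum_congr rfl fun e he => ?_
  induction e using Sym2.ind with
  | h u v =>
    let d : G.Dart := ⟨(u, v), mem_edgeFinset.1 he⟩
    rw [show s(u, v) = d.edge from rfl, d.edge_fiber, sum_pair d.symm_ne.symm]
    rfl

end SimpleGraph

/-- **Theorem (upper bound for the Randić index).**
Every graph `G` with minimum degree at least 1 satisfies `R(G) ≤ |G|/2`. -/
theorem randic_index_upper_bound {V : Type*} [Fintype V] [DecidableEq V]
    (G : SimpleGraph V) [DecidableRel G.Adj] :
    ∑ e ∈ G.edgeFinset,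
        Sym2.lift ⟨fun u v => ((G.degree u : ℝ) * (G.degree v : ℝ)) ^ (-(1 / 2) : ℝ),
          fun u v => by simp [mul_comm]⟩ e ≤
      (Fintype.card V : ℝ) / 2 := by
  set g : V → ℝ := fun v => (G.degree v : ℝ)⁻¹ / 2
  calc _ ≤ ∑ e ∈ G.edgeFinset,
          Sym2.lift ⟨fun u v => g u + g v, fun _ _ => add_comm _ _⟩ e :=
        sum_le_sum fun e _ => e.ind fun u v =>
          Real.mul_rpow_neg_half_le (Nat.cast_nonneg _) (Nat.cast_nonneg _)
    _ = ∑ v, G.degree v • g v := G.sum_edgeFinset_lift_add g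
    _ ≤ ∑ _v : V, (1 / 2 : ℝ) := sum_le_sum fun v _ => by
        rw [nsmul_eq_mul, mul_div_assoc']
        gcongr
        exact mul_inv_le_one
    _ = _ := by simp [div_eq_mul_inv]
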